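/- arXiv:2404.10776 — 4 statements merged into one kernel-verified Lean document; each statement's English description precedes it below -/
import Mathlib

section
/- Let d be a positive integer, let Σ be a symmetric positive definite real d×d matrix, let θ, θ⋆ ∈ ℝ^d and β ≥ 0 satisfy ‖θ − θ⋆‖_Σ ≤ β. Let A be a set, φ : A → ℝ^d, and suppose a_t, b_t ∈ A maximize the score (φ(a) + φ(b))ᵀθ + β‖φ(a) − φ(b)‖_{Σ⁻¹} over all pairs (a,b) ∈ A × A, i.e., for all a, b ∈ A, (φ(a) + φ(b))ᵀθ + β‖φ(a) − φ(b)‖_{Σ⁻¹} ≤ (φ(a_t) + φ(b_t))ᵀθ + β‖φ(a_t) − φ(b_t)‖_{Σ⁻¹}. Then for every a⋆ ∈ A, 2 φ(a⋆)ᵀθ⋆ − φ(a_t)ᵀθ⋆ − φ(b_t)ᵀθ⋆ ≤ 2β‖φ(a_t) − φ(b_t)‖_{Σ⁻¹}. -/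
open Matrix
open scoped MatrixOrder

/-- Plain Cauchy–Schwarz for the standard dot product. -/
lemma dot_cs {d : ℕ} (p q : Fin d → ℝ) :
    p ⬝ᵥ q ≤ Real.sqrt (p ⬝ᵥ p) * Real.sqrt (q ⬝ᵥ q) := by
  have h := Real.sum_mul_le_sqrt_mul_sqrt (Finset.univ : Finset (Fin d)) p q
  simpa [dotProduct, sq] using h

/-- Weighted Cauchy–Schwarz: `u ⬝ᵥ v ≤ √(uᵀ Σ⁻¹ u) · √(vᵀ Σ v)` for `Σ` pos. def. -/
lemma weighted_cs {d : ℕ} (Sig : Matrix (Fin d) (Fin d) ℝ) (hSig : Sig.PosDef)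
    (u v : Fin d → ℝ) :
    u ⬝ᵥ v ≤ Real.sqrt (u ⬝ᵥ (Sig⁻¹).mulVec u) * Real.sqrt (v ⬝ᵥ Sig.mulVec v) := by
  set S := CFC.sqrt Sig with hSdef
  have hSS : S * S = Sig := CFC.sqrt_mul_sqrt_self Sig (nonneg_iff_posSemidef.mpr hSig.posSemidef)
  have hSsymm : Sᵀ = S := by
    have := (CFC.sqrt_nonneg Sig).isSelfAdjoint
    rw [IsSelfAdjoint, Matrix.star_eq_conjTranspose, Matrix.conjTranspose_eq_transpose_of_trivial] at this
    exact this
  have hdet : IsUnit Sig.det := isUnit_iff_ne_zero.mpr (ne_of_gt hSig.det_pos)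
  set x := (Sig⁻¹).mulVec u with hx
  have hxu : Sig.mulVec x = u := by
    rw [hx, Matrix.mulVec_mulVec, Matrix.mul_nonsing_inv _ hdet, Matrix.one_mulVec]
  have hSigsymm : Sigᵀ = Sig := by
    have := hSig.isHermitian
    rw [Matrix.IsHermitian, Matrix.conjTranspose_eq_transpose_of_trivial] at this
    exact this
  have key : ∀ a b : Fin d → ℝ, a ⬝ᵥ Sig.mulVec b = (S.mulVec a) ⬝ᵥ (S.mulVec b) := by
    intro a b
    rw [← hSS, ← Matrix.mulVec_mulVec, Matrix.dotProduct_mulVec a S,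
      ← Matrix.mulVec_transpose, hSsymm]
  have h1 : u ⬝ᵥ v = x ⬝ᵥ Sig.mulVec v := by
    rw [← hxu]
    rw [dotProduct_comm, Matrix.dotProduct_mulVec, ← Matrix.mulVec_transpose, hSigsymm,
      dotProduct_comm]
  have h2 : x ⬝ᵥ Sig.mulVec x = u ⬝ᵥ (Sig⁻¹).mulVec u := by
    rw [key, ← key, hxu, dotProduct_comm]
  calc u ⬝ᵥ v = (S.mulVec x) ⬝ᵥ (S.mulVec v) := by rw [h1, key]
    _ ≤ Real.sqrt ((S.mulVec x) ⬝ᵥ (S.mulVec x)) * Real.sqrt ((S.mulVec v) ⬝ᵥ (S.mulVec v)) :=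
        dot_cs _ _
    _ = Real.sqrt (u ⬝ᵥ (Sig⁻¹).mulVec u) * Real.sqrt (v ⬝ᵥ Sig.mulVec v) := by
        rw [← key, ← key, h2]

/-- deterministic per-round regret bound for the symmetric
action-selection rule of RCDB. -/
theorem stmt_0 {d : ℕ} (hd : 0 < d)
    (Sig : Matrix (Fin d) (Fin d) ℝ) (hSig : Sig.PosDef)
    (θ θs : Fin d → ℝ) (β : ℝ) (hβ : 0 ≤ β)
    (hconf : Real.sqrt ((θ - θs) ⬝ᵥ Sig.mulVec (θ - θs)) ≤ β)
    {A : Type*} (φ : A → Fin d → ℝ) (aT bT : A)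
    (hmax : ∀ a b : A,
      (φ a + φ b) ⬝ᵥ θ + β * Real.sqrt ((φ a - φ b) ⬝ᵥ (Sig⁻¹).mulVec (φ a - φ b))
        ≤ (φ aT + φ bT) ⬝ᵥ θ
            + β * Real.sqrt ((φ aT - φ bT) ⬝ᵥ (Sig⁻¹).mulVec (φ aT - φ bT)))
    (as : A) :
    2 * (φ as ⬝ᵥ θs) - φ aT ⬝ᵥ θs - φ bT ⬝ᵥ θs
      ≤ 2 * β * Real.sqrt ((φ aT - φ bT) ⬝ᵥ (Sig⁻¹).mulVec (φ aT - φ bT)) := by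
  have hθ : Real.sqrt ((θs - θ) ⬝ᵥ Sig.mulVec (θs - θ)) ≤ β := by
    have e : (θs - θ) ⬝ᵥ Sig.mulVec (θs - θ) = (θ - θs) ⬝ᵥ Sig.mulVec (θ - θs) := by
      have h : θs - θ = -(θ - θs) := by abel
      rw [h, Matrix.mulVec_neg, neg_dotProduct, dotProduct_neg, neg_neg]
    rw [e]; exact hconf
  have c : ∀ u : Fin d → ℝ,
      u ⬝ᵥ (θs - θ) ≤ Real.sqrt (u ⬝ᵥ (Sig⁻¹).mulVec u) * β := by
    intro u
    calc u ⬝ᵥ (θs - θ)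
        ≤ Real.sqrt (u ⬝ᵥ (Sig⁻¹).mulVec u) * Real.sqrt ((θs - θ) ⬝ᵥ Sig.mulVec (θs - θ)) :=
          weighted_cs Sig hSig u (θs - θ)
      _ ≤ Real.sqrt (u ⬝ᵥ (Sig⁻¹).mulVec u) * β :=
          mul_le_mul_of_nonneg_left hθ (Real.sqrt_nonneg _)
  have h1 := hmax as bT
  have h2 := hmax as aT
  have c1 := c (φ as - φ aT)
  have c2 := c (φ as - φ bT)
  have e1 : (φ as + φ bT) ⬝ᵥ θ = φ as ⬝ᵥ θ + φ bT ⬝ᵥ θ := add_dotProduct _ _ _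
  have e2 : (φ as + φ aT) ⬝ᵥ θ = φ as ⬝ᵥ θ + φ aT ⬝ᵥ θ := add_dotProduct _ _ _
  have e3 : (φ aT + φ bT) ⬝ᵥ θ = φ aT ⬝ᵥ θ + φ bT ⬝ᵥ θ := add_dotProduct _ _ _
  have e4 : (φ as - φ aT) ⬝ᵥ (θs - θ)
      = φ as ⬝ᵥ θs - φ as ⬝ᵥ θ - φ aT ⬝ᵥ θs + φ aT ⬝ᵥ θ := by
    rw [sub_dotProduct, dotProduct_sub, dotProduct_sub]; ring
  have e5 : (φ as - φ bT) ⬝ᵥ (θs - θ)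
      = φ as ⬝ᵥ θs - φ as ⬝ᵥ θ - φ bT ⬝ᵥ θs + φ bT ⬝ᵥ θ := by
    rw [sub_dotProduct, dotProduct_sub, dotProduct_sub]; ring
  linarith [h1, h2, c1, c2, e1, e2, e3, e4, e5]
end

section
/- Let d be a positive integer, let a ∈ ℝ^d satisfy ‖a‖₂ ≤ 1, and let s ∈ ℝ^d have all entries in {−1, +1}. Then ∑_{i=1}^d (1/√d − aᵢ sᵢ) ≥ (√d/2) · ∑_{i=1}^d (1/√d − aᵢ sᵢ)². -/
/-!
Put `u = (1/√d, …, 1/√d)`, a unit vector, and `b = (aᵢ sᵢ)ᵢ`, so `‖b‖ = ‖a‖ ≤ ‖u‖`. Then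
`‖u - b‖² = ‖u‖² - 2⟪u, b⟫ + ‖b‖² ≤ 2‖u‖² - 2⟪u, b⟫ = 2⟪u, u - b⟫`, and the two ends are the
sum of squares and `2/√d` times the linear sum.
-/

open Finset

theorem norm_sub_sq_le_two_mul_inner_sub {E : Type*} [SeminormedAddCommGroup E]
    [InnerProductSpace ℝ E] {u b : E} (h : ‖b‖ ≤ ‖u‖) :
    ‖u - b‖ ^ 2 ≤ 2 * inner ℝ u (u - b) := by
  rw [norm_sub_sq_real, inner_sub_right, real_inner_self_eq_norm_sq]
  nlinarith [norm_nonneg b]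

theorem sq_mul_eq_sq_of_sign {x s : ℝ} (hs : s = 1 ∨ s = -1) : (x * s) ^ 2 = x ^ 2 := by
  rcases hs with rfl | rfl <;> ring

/-- for ‖a‖₂ ≤ 1 and s with ±1 entries,
∑ᵢ (1/√d − aᵢsᵢ) ≥ (√d/2)·∑ᵢ (1/√d − aᵢsᵢ)². -/
theorem stmt_4 {d : ℕ} (hd : 0 < d) (a s : Fin d → ℝ)
    (ha : Real.sqrt (∑ i, a i ^ 2) ≤ 1)
    (hs : ∀ i, s i = 1 ∨ s i = -1) :
    (Real.sqrt d / 2) * ∑ i, (1 / Real.sqrt d - a i * s i) ^ 2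
      ≤ ∑ i, (1 / Real.sqrt d - a i * s i) := by
  set c := 1 / Real.sqrt d with hc
  let u : EuclideanSpace ℝ (Fin d) := WithLp.toLp 2 fun _ => c
  let b : EuclideanSpace ℝ (Fin d) := WithLp.toLp 2 fun i => a i * s i
  have hu : ‖u‖ = 1 := by
    simp [EuclideanSpace.norm_eq, u, hc, Real.sq_sqrt (Nat.cast_nonneg d), hd.ne']
  have hb : ‖b‖ ≤ ‖u‖ := by
    simpa only [hu, EuclideanSpace.norm_eq, b, Real.norm_eq_abs, sq_abs,
      sq_mul_eq_sq_of_sign (hs _)] using ha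
  have hsq : ∑ i, (c - a i * s i) ^ 2 ≤ 2 * ∑ i, (c - a i * s i) * c := by
    simpa only [EuclideanSpace.real_norm_sq_eq, PiLp.inner_apply, PiLp.sub_apply,
      RCLike.inner_apply, conj_trivial, u, b] using norm_sub_sq_le_two_mul_inner_sub hb
  calc Real.sqrt d / 2 * ∑ i, (c - a i * s i) ^ 2
      ≤ Real.sqrt d / 2 * (2 * ∑ i, (c - a i * s i) * c) := by gcongr
    _ = ∑ i, (c - a i * s i) := by
      have : Real.sqrt d ≠ 0 := (Real.sqrt_pos.2 (by exact_mod_cast hd)).ne'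
      rw [← sum_mul, hc]
      field_simp
end

section
/- Let σ(x) = 1/(1 + e^{−x}) be the sigmoid function. Then for all real numbers z₁, z₂, ∫₀¹ σ'(z₁ + v(z₂ − z₁)) dv ≥ σ'(z₂)/(1 + |z₁ − z₂|), and likewise ∫₀¹ σ'(z₁ + v(z₂ − z₁)) dv ≥ σ'(z₁)/(1 + |z₁ − z₂|). -/
/-- The sigmoid (logistic) link function σ(x) = 1/(1+e^{−x}). -/
noncomputable def sigmoid (x : ℝ) : ℝ := 1 / (1 + Real.exp (-x))

lemma sigmoid_hasDerivAt (x : ℝ) :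
    HasDerivAt sigmoid (Real.exp (-x) / (1 + Real.exp (-x)) ^ 2) x := by
  have h1 : HasDerivAt (fun x : ℝ => 1 + Real.exp (-x)) (-Real.exp (-x)) x := by
    simpa using ((Real.hasDerivAt_exp (-x)).comp x ((hasDerivAt_id x).neg)).const_add 1
  have hne : (1 : ℝ) + Real.exp (-x) ≠ 0 := by positivity
  have h2 : HasDerivAt (fun x => 1 / (1 + Real.exp (-x))) _ x :=
    (hasDerivAt_const x (1:ℝ)).div h1 hne
  rw [show sigmoid = fun x => 1 / (1 + Real.exp (-x)) from rfl]
  convert h2 using 1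
  ring

lemma sigmoid_deriv (x : ℝ) : deriv sigmoid x = Real.exp (-x) / (1 + Real.exp (-x)) ^ 2 :=
  (sigmoid_hasDerivAt x).deriv

lemma deriv_sigmoid_continuous : Continuous (deriv sigmoid) := by
  have : (deriv sigmoid) = fun x => Real.exp (-x) / (1 + Real.exp (-x)) ^ 2 := by
    funext x; exact sigmoid_deriv x
  rw [this]
  have h : ∀ x : ℝ, (1 + Real.exp (-x)) ^ 2 ≠ 0 := fun x => by positivity
  fun_prop (disch := exact h)

lemma integral_eval (z₁ z₂ : ℝ) :
    ∫ v in (0:ℝ)..1, deriv sigmoid (z₁ + v * (z₂ - z₁)) * (z₂ - z₁)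
      = sigmoid z₂ - sigmoid z₁ := by
  have h : ∀ v ∈ Set.uIcc (0:ℝ) 1,
      HasDerivAt (fun v => sigmoid (z₁ + v * (z₂ - z₁)))
        (deriv sigmoid (z₁ + v * (z₂ - z₁)) * (z₂ - z₁)) v := by
    intro v _
    have h1 : HasDerivAt (fun v : ℝ => z₁ + v * (z₂ - z₁)) (z₂ - z₁) v := by
      simpa using ((hasDerivAt_id v).mul_const (z₂ - z₁)).const_add z₁
    have h2 := (sigmoid_hasDerivAt (z₁ + v * (z₂ - z₁))).comp v h1
    rw [sigmoid_deriv]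
    exact h2
  have hc : IntervalIntegrable (fun v => deriv sigmoid (z₁ + v * (z₂ - z₁)) * (z₂ - z₁))
      MeasureTheory.volume 0 1 := by
    apply Continuous.intervalIntegrable
    exact (deriv_sigmoid_continuous.comp (by continuity)).mul continuous_const
  have := intervalIntegral.integral_eq_sub_of_hasDerivAt h hc
  simpa using this

lemma key (a b : ℝ) (hab : a < b) :
    deriv sigmoid b / (1 + (b - a)) ≤ (sigmoid b - sigmoid a) / (b - a) ∧
    deriv sigmoid a / (1 + (b - a)) ≤ (sigmoid b - sigmoid a) / (b - a) := by
  set t := b - a with htdef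
  have ht : 0 < t := sub_pos.2 hab
  set v := Real.exp (-b) with hv
  have hv0 : 0 < v := Real.exp_pos _
  have hu : Real.exp (-a) = v * Real.exp t := by
    rw [hv, ← Real.exp_add, htdef]; ring_nf
  set E := Real.exp t with hE
  have hS : 0 ≤ E - 1 - t := by
    have := Real.add_one_le_exp t; rw [hE]; linarith
  have hE0 : 0 < E := Real.exp_pos _
  have hsb : sigmoid b = 1 / (1 + v) := rfl
  have hsa : sigmoid a = 1 / (1 + v * E) := by rw [sigmoid, hu]
  have hdb : deriv sigmoid b = v / (1 + v) ^ 2 := sigmoid_deriv b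
  have hda : deriv sigmoid a = v * E / (1 + v * E) ^ 2 := by rw [sigmoid_deriv, hu]
  have h1v : (0:ℝ) < 1 + v := by positivity
  have h1vE : (0:ℝ) < 1 + v * E := by positivity
  have h1t : (0:ℝ) < 1 + t := by positivity
  have hdiff : sigmoid b - sigmoid a = (v * E - v) / ((1 + v) * (1 + v * E)) := by
    rw [hsb, hsa]; field_simp; ring
  constructor
  · rw [hdb, hdiff]
    simp only [div_div]
    rw [div_le_div_iff₀ (by positivity) (by positivity)]
    nlinarith [mul_nonneg (mul_nonneg hv0.le h1v.le) (mul_nonneg hS h1t.le),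
      mul_nonneg (mul_nonneg hv0.le h1v.le) (sq_nonneg t),
      mul_nonneg (mul_nonneg (mul_nonneg hv0.le hv0.le) h1v.le) hS]
  · rw [hda, hdiff]
    simp only [div_div]
    rw [div_le_div_iff₀ (by positivity) (by positivity)]
    nlinarith [mul_nonneg (mul_nonneg hv0.le h1vE.le) hS,
      mul_nonneg (mul_nonneg (mul_nonneg (mul_nonneg hv0.le hv0.le) hE0.le) h1vE.le)
        (mul_nonneg hS h1t.le),
      mul_nonneg (mul_nonneg (mul_nonneg (mul_nonneg hv0.le hv0.le) hE0.le) h1vE.le)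
        (sq_nonneg t)]

lemma integral_eval' (z₁ z₂ : ℝ) (h : z₂ - z₁ ≠ 0) :
    ∫ v in (0:ℝ)..1, deriv sigmoid (z₁ + v * (z₂ - z₁))
      = (sigmoid z₂ - sigmoid z₁) / (z₂ - z₁) := by
  have := integral_eval z₁ z₂
  rw [intervalIntegral.integral_mul_const] at this
  field_simp
  linarith [this]

/-- for all z₁, z₂, the average of σ' along the segment from z₁ to z₂
is at least σ'(z₂)/(1 + |z₁ − z₂|), and likewise at least σ'(z₁)/(1 + |z₁ − z₂|). -/
theorem stmt_9 (z₁ z₂ : ℝ) :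
    (deriv sigmoid z₂ / (1 + |z₁ - z₂|)
        ≤ ∫ v in (0:ℝ)..1, deriv sigmoid (z₁ + v * (z₂ - z₁))) ∧
    (deriv sigmoid z₁ / (1 + |z₁ - z₂|)
        ≤ ∫ v in (0:ℝ)..1, deriv sigmoid (z₁ + v * (z₂ - z₁))) := by
  rcases lt_trichotomy z₁ z₂ with h | h | h
  · have hi := integral_eval' z₁ z₂ (by linarith)
    have hk := key z₁ z₂ h
    rw [hi, abs_of_neg (by linarith : z₁ - z₂ < 0)]
    constructor
    · have := hk.1; rw [show -(z₁ - z₂) = z₂ - z₁ by ring]; exact this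
    · have := hk.2; rw [show -(z₁ - z₂) = z₂ - z₁ by ring]; exact this
  · subst h
    simp only [sub_self, mul_zero, add_zero, abs_zero,
      intervalIntegral.integral_const, smul_eq_mul, sub_zero, one_mul]
    constructor <;> simp
  · have hi := integral_eval' z₁ z₂ (by linarith)
    have hk := key z₂ z₁ h
    rw [hi, abs_of_pos (by linarith : 0 < z₁ - z₂)]
    have heq : (sigmoid z₂ - sigmoid z₁) / (z₂ - z₁)
        = (sigmoid z₁ - sigmoid z₂) / (z₁ - z₂) := by
      rw [div_eq_div_iff (by linarith) (by linarith)]; ring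
    rw [heq]
    exact ⟨hk.2, hk.1⟩
end

section
/- Let f : ℝ → ℝ be twice differentiable with f'(x) > 0 for all x and |f''(x)| ≤ f'(x) for all x. Then for all real numbers z₁, z₂ and for z ∈ {z₁, z₂}, ∫₀¹ f'(z₁ + v(z₂ − z₁)) dv ≥ f'(z)/(1 + |z₁ − z₂|). -/
open Real intervalIntegral

lemma pt_bound (f' f'' : ℝ → ℝ)
    (hf'' : ∀ x, HasDerivAt f' (f'' x) x)
    (hpos : ∀ x, 0 < f' x)
    (hsc : ∀ x, |f'' x| ≤ f' x) (x y : ℝ) :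
    f' x * Real.exp (-|x - y|) ≤ f' y := by
  have hg : ∀ t, HasDerivAt (fun u => Real.log (f' u)) (f'' t / f' t) t := fun t =>
    (hf'' t).log (hpos t).ne'
  have hb : |Real.log (f' y) - Real.log (f' x)| ≤ 1 * |y - x| := by
    have := Convex.norm_image_sub_le_of_norm_hasDerivWithin_le (C := 1)
      (f := fun u => Real.log (f' u)) (f' := fun t => f'' t / f' t) (s := Set.univ)
      (fun t _ => (hg t).hasDerivWithinAt) (fun t _ => ?_) convex_univ
      (Set.mem_univ x) (Set.mem_univ y)
    · simpa using this
    · rw [Real.norm_eq_abs, abs_div, abs_of_pos (hpos t)]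
      exact div_le_one_of_le₀ (hsc t) (hpos t).le
  have h1 : Real.log (f' x) - |x - y| ≤ Real.log (f' y) := by
    have := (abs_le.mp hb).1
    rw [abs_sub_comm x y]
    linarith
  calc f' x * Real.exp (-|x - y|)
      = Real.exp (Real.log (f' x) - |x - y|) := by
        rw [Real.exp_sub, Real.exp_log (hpos x), Real.exp_neg, div_eq_mul_inv]
    _ ≤ Real.exp (Real.log (f' y)) := Real.exp_le_exp.mpr h1
    _ = f' y := Real.exp_log (hpos y)

lemma aux_case (f' f'' : ℝ → ℝ)
    (hf'' : ∀ x, HasDerivAt f' (f'' x) x)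
    (hpos : ∀ x, 0 < f' x)
    (hsc : ∀ x, |f'' x| ≤ f' x) (z₁ z₂ : ℝ) :
    f' z₁ / (1 + |z₁ - z₂|) ≤ ∫ v in (0:ℝ)..1, f' (z₁ + v * (z₂ - z₁)) := by
  set d := |z₁ - z₂| with hd
  have hd0 : 0 ≤ d := abs_nonneg _
  have hcontf' : Continuous f' :=
    continuous_iff_continuousAt.mpr fun x => (hf'' x).continuousAt
  have hcont : Continuous fun v : ℝ => f' (z₁ + v * (z₂ - z₁)) := by
    exact hcontf'.comp (by continuity)
  have hcontE : Continuous fun v : ℝ => f' z₁ * Real.exp (-(d * v)) := by continuity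
  have hmono : ∫ v in (0:ℝ)..1, f' z₁ * Real.exp (-(d * v))
      ≤ ∫ v in (0:ℝ)..1, f' (z₁ + v * (z₂ - z₁)) := by
    apply intervalIntegral.integral_mono_on zero_le_one
      (hcontE.intervalIntegrable 0 1) (hcont.intervalIntegrable 0 1)
    intro v hv
    have habs : |z₁ - (z₁ + v * (z₂ - z₁))| = d * v := by
      rw [hd, abs_sub_comm z₁ z₂]
      have : z₁ - (z₁ + v * (z₂ - z₁)) = -(v * (z₂ - z₁)) := by ring
      rw [this, abs_neg, abs_mul, abs_of_nonneg hv.1, mul_comm]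
    have := pt_bound f' f'' hf'' hpos hsc z₁ (z₁ + v * (z₂ - z₁))
    rwa [habs] at this
  refine le_trans ?_ hmono
  rcases eq_or_lt_of_le hd0 with hdz | hdz
  · simp [← hdz]
  · have hI : ∫ v in (0:ℝ)..1, Real.exp (-(d * v)) = (1 - Real.exp (-d)) / d := by
      have hF : ∀ v : ℝ, HasDerivAt (fun v : ℝ => -(Real.exp (-(d * v))) / d)
          (Real.exp (-(d * v))) v := by
        intro v
        have h1 : HasDerivAt (fun v : ℝ => -(d * v)) (-d) v := by
          exact (((hasDerivAt_id v).const_mul d).neg).congr_deriv (by ring)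
        have h2 := (h1.exp).neg.div_const d
        exact h2.congr_deriv (by rw [mul_neg, neg_neg, mul_div_assoc, div_self hdz.ne', mul_one])
      rw [intervalIntegral.integral_eq_sub_of_hasDerivAt (fun v _ => hF v)
        ((by continuity : Continuous fun v : ℝ => Real.exp (-(d * v))).intervalIntegrable 0 1)]
      field_simp
      simp only [mul_zero, neg_zero, Real.exp_zero]
      ring
    rw [intervalIntegral.integral_const_mul, hI]
    have key : d ≤ (1 - Real.exp (-d)) * (1 + d) := by
      have h1 : d + 1 ≤ Real.exp d := Real.add_one_le_exp d
      have h2 : Real.exp (-d) * Real.exp d = 1 := by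
        rw [← Real.exp_add]; simp
      nlinarith [Real.exp_pos (-d)]
    rw [div_le_iff₀ (by linarith : (0:ℝ) < 1 + d), mul_comm (f' z₁),
      div_mul_eq_mul_div, div_mul_eq_mul_div, le_div_iff₀ hdz]
    nlinarith [hpos z₁]
  
/-- self-concordance integral lemma (Lemma 7 of Abeille et al.):
if f is twice differentiable with f' > 0 and |f''| ≤ f', then for all z₁, z₂ and
z ∈ {z₁, z₂}, ∫₀¹ f'(z₁ + v(z₂ − z₁)) dv ≥ f'(z)/(1 + |z₁ − z₂|). -/
theorem stmt_10 (f f' f'' : ℝ → ℝ)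
    (hf' : ∀ x, HasDerivAt f (f' x) x)
    (hf'' : ∀ x, HasDerivAt f' (f'' x) x)
    (hpos : ∀ x, 0 < f' x)
    (hsc : ∀ x, |f'' x| ≤ f' x)
    (z₁ z₂ z : ℝ) (hz : z = z₁ ∨ z = z₂) :
    f' z / (1 + |z₁ - z₂|) ≤ ∫ v in (0:ℝ)..1, f' (z₁ + v * (z₂ - z₁)) := by
  rcases hz with h | h
  · rw [h]; exact aux_case f' f'' hf'' hpos hsc z₁ z₂
  · rw [h]
    have heq : (∫ v in (0:ℝ)..1, f' (z₁ + v * (z₂ - z₁)))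
        = ∫ v in (0:ℝ)..1, f' (z₂ + v * (z₁ - z₂)) := by
      have h1 : ∀ v : ℝ, f' (z₁ + v * (z₂ - z₁)) = f' (z₂ + (1 - v) * (z₁ - z₂)) := by
        intro v; ring_nf
      simp_rw [h1]
      rw [intervalIntegral.integral_comp_sub_left (fun u => f' (z₂ + u * (z₁ - z₂))) 1]
      norm_num
    rw [heq, abs_sub_comm]
    exact aux_case f' f'' hf'' hpos hsc z₂ z₁
end
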